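/- Let f be a Markov interval map and x ∈ E_f. For every pair (i,j) with a_{ij} = 1, the operator S_{ij} := T_i T_j T_j* on H_x is a nonzero partial isometry satisfying S_{ij}* S_{ij} = P_j and S_{ij} S_{ij}* ≤ P_i, where P_k := T_k T_k*. -/

import Mathlib

open scoped Classical ENNReal

noncomputable section

/-- Partition and branch data for a Markov interval map with `n` Markov
subintervals.  `cm j` is the point `c_j⁻` and `cp j` is `c_j⁺` (with
`cm 0 = cp 0 = c₀` and `cm n = cp n = c_n`).  `f` is the globally defined map,
`F j` is the branch of `f` on the `j`-th Markov interval (indexed by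
`j = 0, …, n-1`, corresponding to the interval `I_{j+1}` of the paper) and
`F' j` is the derivative of that branch. -/
structure MarkovSystem (n : ℕ) where
  cm : ℕ → ℝ
  cp : ℕ → ℝ
  f : ℝ → ℝ
  F : ℕ → ℝ → ℝ
  F' : ℕ → ℝ → ℝ
  two_le : 2 ≤ n
  cm_zero : cm 0 = cp 0
  cm_n : cm n = cp n
  cm_le_cp : ∀ j ≤ n, cm j ≤ cp j
  cp_lt_cm : ∀ j < n, cp j < cm (j + 1)

namespace MarkovSystem

variable {n : ℕ} (M : MarkovSystem n)

/-- The Markov interval `I_{j+1} = [c_j⁺, c_{j+1}⁻]` (for `j < n`). -/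
def Ipart (j : ℕ) : Set ℝ := Set.Icc (M.cp j) (M.cm (j + 1))

/-- The escape interval `E_j = (c_j⁻, c_j⁺)` (for `1 ≤ j ≤ n-1`). -/
def Epart (j : ℕ) : Set ℝ := Set.Ioo (M.cm j) (M.cp j)

/-- The ambient interval `I = [c₀, c_n]`. -/
def itv : Set ℝ := Set.Icc (M.cm 0) (M.cm n)

/-- The domain of `f`, namely `⋃_{j=1}^n I_j`. -/
def dom : Set ℝ := ⋃ j ∈ Finset.range n, M.Ipart j

/-- The set `Γ` of partition boundary points. -/
def Gamma : Set ℝ := {y | ∃ j ≤ n, y = M.cm j ∨ y = M.cp j}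

/-- `q`-fold image of a set under `f`, applying `f` only where it is defined. -/
def iterImage : ℕ → Set ℝ → Set ℝ
  | 0, S => S
  | q + 1, S => M.f '' (iterImage q S ∩ M.dom)

/-- `f^k(x)` is defined, i.e. all earlier iterates lie in the domain. -/
def definedUpTo (k : ℕ) (x : ℝ) : Prop := ∀ l < k, M.f^[l] x ∈ M.dom

/-- The orbit equivalence relation `R_f`. -/
def Rrel (x y : ℝ) : Prop :=
  ∃ p q : ℕ, M.definedUpTo p x ∧ M.definedUpTo q y ∧ M.f^[p] x = M.f^[q] y

/-- The generalized orbit `R_f(x)` of a point `x ∈ I`. -/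
def Rclass (x : ℝ) : Set ℝ := {y | y ∈ M.itv ∧ M.Rrel x y}

/-- The maximal invariant set `Ω_f`. -/
def Omega : Set ℝ := {x | x ∈ M.itv ∧ ∀ k, M.f^[k] x ∈ M.dom}

/-- The escape set `E_f = I \ Ω_f`. -/
def Esc : Set ℝ := M.itv \ M.Omega

/-- The regular set `Λ_f = Ω_f \ R_f(Γ)`. -/
def Lambda : Set ℝ := {x | x ∈ M.Omega ∧ ∀ γ ∈ M.Gamma, ¬ M.Rrel x γ}

/-- The escape time of a point of the escape set. -/
def tau (x : ℝ) : ℕ := sInf {k | M.f^[k] x ∉ M.dom}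

/-- The final escape point `e(x) = f^{τ(x)}(x)`. -/
def e (x : ℝ) : ℝ := M.f^[M.tau x] x

/-- The transition-matrix condition `a_{ij} = 1`, i.e. `f(int I_i) ⊇ int I_j`. -/
def trans (i j : ℕ) : Prop := interior (M.Ipart j) ⊆ M.F i '' interior (M.Ipart i)

/-- The escape-transition condition `â_{ik} = 1`, i.e. `int I_i ∩ f⁻¹(E_k) ≠ ∅`. -/
def ahat (i k : ℕ) : Prop := (interior (M.Ipart i) ∩ M.F i ⁻¹' M.Epart k).Nonempty

end MarkovSystem

/-- The defining properties (P1)-(P4) of a Markov interval map, together with the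
compatibility of the global map `f` with the branches `F j`:  `f` agrees with `F j`
on `I_j` except possibly at a boundary point shared with an adjacent interval,
where `f` is given by one of the two adjacent branches. -/
structure IsMarkov {n : ℕ} (M : MarkovSystem n) : Prop where
  compat₁ : ∀ j < n, ∀ x ∈ M.Ipart j, (∀ k < n, k ≠ j → x ∉ M.Ipart k) → M.f x = M.F j x
  compat₂ : ∀ x ∈ M.dom, ∃ j, j < n ∧ x ∈ M.Ipart j ∧ M.f x = M.F j x
  maps_into : ∀ j < n, M.F j '' M.Ipart j ⊆ M.itv
  onto : M.itv ⊆ ⋃ j ∈ Finset.range n, M.F j '' M.Ipart j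
  markov : ∀ i < n, ∃ S T : Set ℕ, S ⊆ {j | j < n} ∧ T ⊆ {j | 1 ≤ j ∧ j < n} ∧
    M.F i '' M.Ipart i = (⋃ j ∈ S, M.Ipart j) ∪ (⋃ j ∈ T, M.Epart j)
  deriv : ∀ i < n, ∀ x ∈ M.Ipart i, HasDerivWithinAt (M.F i) (M.F' i x) (M.Ipart i) x
  derivCont : ∀ i < n, ContinuousOn (M.F' i) (M.Ipart i)
  mono : ∀ i < n, StrictMonoOn (M.F i) (M.Ipart i) ∨ StrictAntiOn (M.F i) (M.Ipart i)
  expansive : ∃ b > 1, ∀ i < n, ∀ x ∈ M.Ipart i, b < |M.F' i x|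
  aperiodic : ∀ i < n, ∃ q, M.dom ⊆ M.iterImage q (M.Ipart i)

namespace MarkovSystem

variable {n : ℕ} (M : MarkovSystem n)

/-- The Hilbert space `H_x = ℓ²(R_f(x))`. -/
abbrev Hsp (x : ℝ) : Type _ := lp (fun _ : M.Rclass x => ℂ) 2

/-- The canonical orthonormal basis vector `δ_z` of `H_x`, for `z ∈ R_f(x)`. -/
def dvec {x : ℝ} (z : M.Rclass x) : M.Hsp x := lp.single 2 z 1

/-- `T` is the bounded operator `T_i` on `H_x`, determined on the basis by
`T_i δ_y = δ_{(f|_{I_i})⁻¹(y)}` if `y ∈ f(I_i)` and `T_i δ_y = 0` otherwise. -/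
def IsBranchOp (x : ℝ) (i : ℕ) (T : M.Hsp x →L[ℂ] M.Hsp x) : Prop :=
  (∀ z w : M.Rclass x, (w : ℝ) ∈ M.Ipart i → M.F i w = (z : ℝ) →
      T (M.dvec z) = M.dvec w) ∧
  (∀ z : M.Rclass x, (z : ℝ) ∉ M.F i '' M.Ipart i → T (M.dvec z) = 0)

/-- `Pe` is the rank-one orthogonal projection onto `ℂ δ_{e(x)}`. -/
def IsEscProj (x : ℝ) (Pe : M.Hsp x →L[ℂ] M.Hsp x) : Prop :=
  ∀ z : M.Rclass x, Pe (M.dvec z) = if (z : ℝ) = M.e x then M.dvec z else 0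

end MarkovSystem


/-!
Points in the orbit class of an escaping point never meet the set `Γ` of partition points:
`Γ` lies in the domain and is forward invariant, since by the Markov property a branch maps
the endpoints of its interval to extreme points of a union of intervals `I_k` and gaps `E_k`.
So every branch `F_m` is a bijection between the class points of `I_m` and those of
`F_m(I_m)`, and on `ℓ²(R_f(x))` the operator `T_m` is `v ↦ 1_{I_m} · (v ∘ F_m)`. Thus
`T_m T_m*` and `T_m* T_m` are the diagonal projections onto `I_m` and `F_m(I_m)`; for
`a_ij = 1` the first for `j` lies below the second for `i`, and the claims about
`S_ij = T_i P_j` become algebra in a star-ordered ring. `P_j ≠ 0` because aperiodicity puts a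
class point in `I_j`.
-/

lemma inner_lp_single_one_left {X : Type*} [DecidableEq X] (u : X) (v : lp (fun _ : X => ℂ) 2) :
    inner ℂ (lp.single 2 u (1 : ℂ)) v = v u := by
  simp [lp.inner_single_left]

section StarProjection

variable {R : Type*} [Ring R] [StarRing R] {p t : R}

lemma IsStarProjection.star_mul_mul_self (hp : IsStarProjection p) (htp : star t * t * p = p) :
    star (t * p) * (t * p) = p := by
  rw [star_mul, hp.isSelfAdjoint.star_eq, mul_assoc, ← mul_assoc (star t), htp,
    hp.isIdempotentElem.eq]

lemma IsStarProjection.mul_mul_star_le [PartialOrder R] [StarOrderedRing R]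
    (hp : IsStarProjection p) (t : R) : t * p * star (t * p) ≤ t * star t := by
  calc t * p * star (t * p) = t * p * star t := by
        rw [star_mul, hp.isSelfAdjoint.star_eq, ← mul_assoc, mul_assoc t, hp.isIdempotentElem.eq]
    _ ≤ t * 1 * star t := star_right_conjugate_le_conjugate hp.le_one t
    _ = t * star t := by rw [mul_one]

end StarProjection

section IndicatorOperator

variable {X : Type*} {A B : lp (fun _ : X => ℂ) 2 →L[ℂ] lp (fun _ : X => ℂ) 2} {D E : Set X}

lemma mul_eq_right_of_apply_eq_indicator (hA : ∀ v, ⇑(A v) = D.indicator v)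
    (hB : ∀ v, ⇑(B v) = E.indicator v) (hED : E ⊆ D) : A * B = B := by
  ext v : 1
  refine lp.ext ?_
  rw [mul_apply_eq_comp, hA, hB, Set.indicator_indicator, Set.inter_eq_right.mpr hED]

lemma ne_zero_of_apply_eq_indicator [DecidableEq X] (hA : ∀ v, ⇑(A v) = D.indicator v)
    (hD : D.Nonempty) : A ≠ 0 := by
  obtain ⟨u, hu⟩ := hD
  intro h0
  have h := congrFun (hA (lp.single 2 u 1)) u
  rw [h0, Set.indicator_of_mem hu, lp.single_apply_self] at h
  exact zero_ne_one h

end IndicatorOperator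

section CompositionOperator

variable {Y : Type*} {S : Set Y} [DecidableEq S]

/-- The operator `v ↦ 1_D · (v ∘ g)` on `ℓ²(S)`, described on the standard basis as in
`MarkovSystem.IsBranchOp`. -/
def IsCompositionOpOn (g : Y → Y) (D : Set Y)
    (T : lp (fun _ : S => ℂ) 2 →L[ℂ] lp (fun _ : S => ℂ) 2) : Prop :=
  (∀ z w : S, (w : Y) ∈ D → g w = z → T (lp.single 2 z 1) = lp.single 2 w 1) ∧
  (∀ z : S, (z : Y) ∉ g '' D → T (lp.single 2 z 1) = 0)

namespace IsCompositionOpOn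

variable {g : Y → Y} {D : Set Y} {T : lp (fun _ : S => ℂ) 2 →L[ℂ] lp (fun _ : S => ℂ) 2}

lemma star_apply_of_eq (hT : IsCompositionOpOn g D T) {z w : S} (hw : (w : Y) ∈ D)
    (hwz : g w = z) (v : lp (fun _ : S => ℂ) 2) : star T v z = v w := by
  rw [← inner_lp_single_one_left, ContinuousLinearMap.star_eq_adjoint,
    ContinuousLinearMap.adjoint_inner_right, hT.1 z w hw hwz, inner_lp_single_one_left]

lemma star_apply_of_notMem (hT : IsCompositionOpOn g D T) {z : S} (hz : (z : Y) ∉ g '' D)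
    (v : lp (fun _ : S => ℂ) 2) : star T v z = 0 := by
  rw [← inner_lp_single_one_left, ContinuousLinearMap.star_eq_adjoint,
    ContinuousLinearMap.adjoint_inner_right, hT.2 z hz, inner_zero_left]

lemma star_single_of_eq (hT : IsCompositionOpOn g D T) (hS : ∀ w ∈ D, g w ∈ S ↔ w ∈ S)
    (hinj : D.InjOn g) {u z : S} (hu : (u : Y) ∈ D) (huz : g u = z) :
    star T (lp.single 2 u 1) = lp.single 2 z 1 := by
  refine lp.ext (funext fun q => ?_)
  by_cases hq : (q : Y) ∈ g '' D
  · obtain ⟨w, hw, hwq⟩ := hq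
    have hwS : w ∈ S := (hS w hw).mp (hwq ▸ q.2)
    rw [hT.star_apply_of_eq (w := ⟨w, hwS⟩) hw hwq]
    by_cases hwu : (⟨w, hwS⟩ : S) = u
    · have hqz : q = z := Subtype.ext (by rw [← hwq, ← huz, ← hwu])
      rw [hwu, hqz, lp.single_apply_self, lp.single_apply_self]
    · have hqz : q ≠ z := fun hqz =>
        hwu (Subtype.ext (hinj hw hu (by rw [hwq, huz, hqz])))
      rw [lp.single_apply_ne _ _ _ hwu, lp.single_apply_ne _ _ _ hqz]
  · have hqz : q ≠ z := fun hqz => hq ⟨u, hu, by rw [huz, hqz]⟩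
    rw [hT.star_apply_of_notMem hq, lp.single_apply_ne _ _ _ hqz]

lemma star_single_of_notMem (hT : IsCompositionOpOn g D T) (hS : ∀ w ∈ D, g w ∈ S ↔ w ∈ S)
    {u : S} (hu : (u : Y) ∉ D) : star T (lp.single 2 u 1) = 0 := by
  refine lp.ext (funext fun q => ?_)
  by_cases hq : (q : Y) ∈ g '' D
  · obtain ⟨w, hw, hwq⟩ := hq
    have hwS : w ∈ S := (hS w hw).mp (hwq ▸ q.2)
    have hwu : (⟨w, hwS⟩ : S) ≠ u := fun hwu => hu (hwu ▸ hw)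
    rw [hT.star_apply_of_eq (w := ⟨w, hwS⟩) hw hwq, lp.single_apply_ne _ _ _ hwu]
    rfl
  · rw [hT.star_apply_of_notMem hq]
    rfl

lemma apply_of_eq (hT : IsCompositionOpOn g D T) (hS : ∀ w ∈ D, g w ∈ S ↔ w ∈ S)
    (hinj : D.InjOn g) {u z : S} (hu : (u : Y) ∈ D) (huz : g u = z)
    (v : lp (fun _ : S => ℂ) 2) : T v u = v z := by
  rw [← inner_lp_single_one_left, ← ContinuousLinearMap.adjoint_inner_left,
    ← ContinuousLinearMap.star_eq_adjoint, hT.star_single_of_eq hS hinj hu huz,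
    inner_lp_single_one_left]

lemma apply_of_notMem (hT : IsCompositionOpOn g D T) (hS : ∀ w ∈ D, g w ∈ S ↔ w ∈ S)
    {u : S} (hu : (u : Y) ∉ D) (v : lp (fun _ : S => ℂ) 2) : T v u = 0 := by
  rw [← inner_lp_single_one_left, ← ContinuousLinearMap.adjoint_inner_left,
    ← ContinuousLinearMap.star_eq_adjoint, hT.star_single_of_notMem hS hu, inner_zero_left]

lemma mul_star_apply (hT : IsCompositionOpOn g D T) (hS : ∀ w ∈ D, g w ∈ S ↔ w ∈ S)
    (hinj : D.InjOn g) (v : lp (fun _ : S => ℂ) 2) :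
    ⇑((T * star T) v) = {u : S | (u : Y) ∈ D}.indicator v := by
  funext u
  rw [mul_apply_eq_comp]
  by_cases hu : (u : Y) ∈ D
  · have hgu : g u ∈ S := (hS u hu).mpr u.2
    rw [Set.indicator_of_mem (show u ∈ {u : S | (u : Y) ∈ D} from hu),
      hT.apply_of_eq hS hinj hu (z := ⟨g u, hgu⟩) rfl, hT.star_apply_of_eq hu rfl]
  · rw [Set.indicator_of_notMem (show u ∉ {u : S | (u : Y) ∈ D} from hu),
      hT.apply_of_notMem hS hu]

lemma star_mul_apply (hT : IsCompositionOpOn g D T) (hS : ∀ w ∈ D, g w ∈ S ↔ w ∈ S)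
    (hinj : D.InjOn g) (v : lp (fun _ : S => ℂ) 2) :
    ⇑((star T * T) v) = {z : S | (z : Y) ∈ g '' D}.indicator v := by
  funext z
  rw [mul_apply_eq_comp]
  by_cases hz : (z : Y) ∈ g '' D
  · obtain ⟨w, hw, hwz⟩ := hz
    have hwS : w ∈ S := (hS w hw).mp (hwz ▸ z.2)
    rw [Set.indicator_of_mem (show z ∈ {z : S | (z : Y) ∈ g '' D} from ⟨w, hw, hwz⟩),
      hT.star_apply_of_eq (w := ⟨w, hwS⟩) hw hwz,
      hT.apply_of_eq hS hinj (u := ⟨w, hwS⟩) hw hwz]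
  · rw [Set.indicator_of_notMem (show z ∉ {z : S | (z : Y) ∈ g '' D} from hz),
      hT.star_apply_of_notMem hz]

end IsCompositionOpOn

end CompositionOperator

lemma notMem_Ioo_of_isLeast_or_isGreatest {α : Type*} [LinearOrder α] [DenselyOrdered α]
    {s : Set α} {a p q : α} (ha : IsLeast s a ∨ IsGreatest s a) (hs : Set.Ioo p q ⊆ s) :
    a ∉ Set.Ioo p q := by
  rintro ⟨hpa, haq⟩
  rcases ha with ha | ha
  · obtain ⟨y, hpy, hya⟩ := exists_between hpa
    exact hya.not_ge (ha.2 (hs ⟨hpy, hya.trans haq⟩))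
  · obtain ⟨y, hay, hyq⟩ := exists_between haq
    exact hay.not_ge (ha.2 (hs ⟨hpa.trans hay, hyq⟩))

lemma isLeast_or_isGreatest_image {α β : Type*} [Preorder α] [Preorder β] {f : α → β}
    {s : Set α} {a : α} (hf : MonotoneOn f s ∨ AntitoneOn f s)
    (ha : IsLeast s a ∨ IsGreatest s a) :
    IsLeast (f '' s) (f a) ∨ IsGreatest (f '' s) (f a) := by
  rcases hf with hf | hf <;> rcases ha with ha | ha
  · exact .inl (hf.map_isLeast ha)
  · exact .inr (hf.map_isGreatest ha)
  · exact .inr (hf.map_isLeast ha)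
  · exact .inl (hf.map_isGreatest ha)

namespace MarkovSystem

open Set

variable {n : ℕ} {M : MarkovSystem n}

lemma cp_le_cm_of_lt {j k : ℕ} (hjk : j < k) (hk : k ≤ n) : M.cp j ≤ M.cm k := by
  induction k, hjk using Nat.le_induction with
  | base => exact (M.cp_lt_cm j (by omega)).le
  | succ k hjk ih =>
    exact (ih (by omega)).trans ((M.cm_le_cp k (by omega)).trans (M.cp_lt_cm k (by omega)).le)

lemma cm_le_cp_of_le {j k : ℕ} (hjk : j ≤ k) (hk : k ≤ n) : M.cm j ≤ M.cp k := by
  rcases hjk.eq_or_lt with rfl | hlt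
  · exact M.cm_le_cp j hk
  · exact (M.cm_le_cp j (by omega)).trans ((cp_le_cm_of_lt hlt hk).trans (M.cm_le_cp k hk))

lemma cp_mono {j k : ℕ} (hjk : j ≤ k) (hk : k ≤ n) : M.cp j ≤ M.cp k := by
  rcases hjk.eq_or_lt with rfl | hlt
  · rfl
  · exact (cp_le_cm_of_lt hlt hk).trans (M.cm_le_cp k hk)

lemma cm_mono {j k : ℕ} (hjk : j ≤ k) (hk : k ≤ n) : M.cm j ≤ M.cm k := by
  rcases hjk.eq_or_lt with rfl | hlt
  · rfl
  · exact (M.cm_le_cp j (by omega)).trans (cp_le_cm_of_lt hlt hk)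

lemma left_mem_Ipart {m : ℕ} (hm : m < n) : M.cp m ∈ M.Ipart m :=
  left_mem_Icc.mpr (M.cp_lt_cm m hm).le

lemma right_mem_Ipart {m : ℕ} (hm : m < n) : M.cm (m + 1) ∈ M.Ipart m :=
  right_mem_Icc.mpr (M.cp_lt_cm m hm).le

lemma Ipart_subset_dom {m : ℕ} (hm : m < n) : M.Ipart m ⊆ M.dom :=
  fun _ hy => mem_iUnion₂.mpr ⟨m, Finset.mem_range.mpr hm, hy⟩

lemma Ipart_subset_itv {m : ℕ} (hm : m < n) : M.Ipart m ⊆ M.itv := fun _ hy =>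
  ⟨M.cm_zero.trans_le ((cp_mono (Nat.zero_le m) hm.le).trans hy.1),
    hy.2.trans (cm_mono hm le_rfl)⟩

lemma Gamma_subset_dom : M.Gamma ⊆ M.dom := by
  have hn := M.two_le
  rintro γ ⟨l, hl, rfl | rfl⟩
  · rcases l with _ | k
    · rw [M.cm_zero]
      exact Ipart_subset_dom (by omega) (left_mem_Ipart (by omega))
    · exact Ipart_subset_dom (by omega) (right_mem_Ipart (by omega))
  · rcases hl.lt_or_eq with hl | hl
    · exact Ipart_subset_dom hl (left_mem_Ipart hl)
    · rw [hl, ← M.cm_n, congrArg M.cm (Nat.sub_add_cancel (by omega : 1 ≤ n)).symm]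
      exact Ipart_subset_dom (by omega) (right_mem_Ipart (by omega))

lemma notMem_Gamma_of_mem_Ioo {m : ℕ} (hm : m < n) {z : ℝ}
    (hz : z ∈ Ioo (M.cp m) (M.cm (m + 1))) : z ∉ M.Gamma := by
  rintro ⟨l, hl, rfl | rfl⟩ <;> rcases le_or_gt l m with h | h
  · exact hz.1.not_ge (cm_le_cp_of_le h hm.le)
  · exact hz.2.not_ge (cm_mono h hl)
  · exact hz.1.not_ge (cp_mono h hm.le)
  · exact hz.2.not_ge (cm_le_cp_of_le h hl)

lemma notMem_Ipart_of_mem_Ioo {m k : ℕ} (hm : m < n) (hk : k < n) (hkm : k ≠ m) {z : ℝ}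
    (hz : z ∈ Ioo (M.cp m) (M.cm (m + 1))) : z ∉ M.Ipart k := by
  rintro ⟨hkz, hzk⟩
  rcases hkm.lt_or_gt with h | h
  · exact hz.1.not_ge (hzk.trans (cm_le_cp_of_le h hm.le))
  · exact hz.2.not_ge ((cm_le_cp_of_le h hk.le).trans hkz)

lemma mem_Ioo_of_notMem_Gamma {m : ℕ} (hm : m < n) {z : ℝ} (hz : z ∈ M.Ipart m)
    (hzΓ : z ∉ M.Gamma) : z ∈ Ioo (M.cp m) (M.cm (m + 1)) :=
  ⟨hz.1.lt_of_ne fun h => hzΓ ⟨m, hm.le, .inr h.symm⟩,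
    hz.2.lt_of_ne fun h => hzΓ ⟨m + 1, hm, .inl h⟩⟩

lemma f_eq_F_of_notMem_Gamma (hM : IsMarkov M) {m : ℕ} (hm : m < n) {z : ℝ}
    (hz : z ∈ M.Ipart m) (hzΓ : z ∉ M.Gamma) : M.f z = M.F m z :=
  hM.compat₁ m hm z hz fun _ hk hkm =>
    notMem_Ipart_of_mem_Ioo hm hk hkm (mem_Ioo_of_notMem_Gamma hm hz hzΓ)

lemma mem_Gamma_of_isLeast_or_isGreatest (hM : IsMarkov M) {m : ℕ} (hm : m < n) {a : ℝ}
    (ha : IsLeast (M.F m '' M.Ipart m) a ∨ IsGreatest (M.F m '' M.Ipart m) a) :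
    a ∈ M.Gamma := by
  obtain ⟨I, E, hI, -, himg⟩ := hM.markov m hm
  have ha_mem : a ∈ M.F m '' M.Ipart m := ha.elim (·.1) (·.1)
  rw [himg] at ha ha_mem
  rcases ha_mem with haI | haE
  · obtain ⟨s, hs, has⟩ := mem_iUnion₂.mp haI
    by_contra hΓ
    refine notMem_Ioo_of_isLeast_or_isGreatest ha ?_ (mem_Ioo_of_notMem_Gamma (hI hs) has hΓ)
    exact fun y hy => .inl (mem_iUnion₂.mpr ⟨s, hs, Ioo_subset_Icc_self hy⟩)
  · obtain ⟨t, ht, hat⟩ := mem_iUnion₂.mp haE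
    refine absurd hat (notMem_Ioo_of_isLeast_or_isGreatest ha ?_)
    exact fun y hy => .inr (mem_iUnion₂.mpr ⟨t, ht, hy⟩)

lemma F_mem_Gamma (hM : IsMarkov M) {m : ℕ} (hm : m < n) {γ : ℝ} (hγI : γ ∈ M.Ipart m)
    (hγ : γ ∈ M.Gamma) : M.F m γ ∈ M.Gamma := by
  have hle := (M.cp_lt_cm m hm).le
  have hend : IsLeast (M.Ipart m) γ ∨ IsGreatest (M.Ipart m) γ := by
    rcases hγI.1.eq_or_lt with h | h
    · exact .inl (h ▸ isLeast_Icc hle)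
    rcases hγI.2.eq_or_lt with h' | h'
    · exact .inr (h' ▸ isGreatest_Icc hle)
    exact absurd hγ (notMem_Gamma_of_mem_Ioo hm ⟨h, h'⟩)
  exact mem_Gamma_of_isLeast_or_isGreatest hM hm <| isLeast_or_isGreatest_image
    ((hM.mono m hm).imp StrictMonoOn.monotoneOn StrictAntiOn.antitoneOn) hend

lemma iterate_mem_Gamma (hM : IsMarkov M) {γ : ℝ} (hγ : γ ∈ M.Gamma) (k : ℕ) :
    M.f^[k] γ ∈ M.Gamma := by
  induction k with
  | zero => exact hγ
  | succ k ih =>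
    obtain ⟨m, hm, hI, hf⟩ := hM.compat₂ _ (Gamma_subset_dom ih)
    rw [Function.iterate_succ_apply', hf]
    exact F_mem_Gamma hM hm hI ih

lemma definedUpTo_add {p q : ℕ} {u : ℝ} (hq : M.definedUpTo q u)
    (hp : M.definedUpTo p (M.f^[q] u)) : M.definedUpTo (p + q) u := by
  intro l hl
  rcases lt_or_ge l q with h | h
  · exact hq l h
  · obtain ⟨k, rfl⟩ := Nat.exists_eq_add_of_le' h
    rw [Function.iterate_add_apply]
    exact hp k (by omega)

lemma Rrel.of_iterate {x u : ℝ} {q : ℕ} (h : M.Rrel x (M.f^[q] u)) (hu : M.definedUpTo q u) :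
    M.Rrel x u := by
  obtain ⟨p, p', hx, hy, he⟩ := h
  exact ⟨p, p' + q, hx, definedUpTo_add hu hy, by rw [he, Function.iterate_add_apply]⟩

lemma Rrel.apply {x z : ℝ} (h : M.Rrel x z) (hz : z ∈ M.dom) : M.Rrel x (M.f z) := by
  obtain ⟨p, q, hx, hy, he⟩ := h
  cases q with
  | zero =>
    refine ⟨1 + p, 0, definedUpTo_add hx ?_, fun _ h => absurd h (Nat.not_lt_zero _), ?_⟩
    · intro l hl
      rwa [Nat.lt_one_iff.mp hl, Function.iterate_zero_apply, he]
    · rw [Function.iterate_add_apply, he]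
      rfl
  | succ q =>
    refine ⟨p, q, hx, fun l hl => ?_, by rw [he, Function.iterate_succ_apply]⟩
    rw [← Function.iterate_succ_apply]
    exact hy (l + 1) (by omega)

lemma Rrel.exists_iterate_notMem_dom {x z : ℝ} (hx : x ∈ M.Esc) (h : M.Rrel x z) :
    ∃ k, M.f^[k] z ∉ M.dom := by
  obtain ⟨k, hk⟩ : ∃ k, M.f^[k] x ∉ M.dom := by
    by_contra! h'
    exact hx.2 ⟨hx.1, h'⟩
  obtain ⟨p, q, hpx, -, he⟩ := h
  obtain ⟨d, rfl⟩ := Nat.exists_eq_add_of_le' (not_lt.mp fun hkp => hk (hpx k hkp))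
  exact ⟨d + q, by rwa [Function.iterate_add_apply, ← he, ← Function.iterate_add_apply]⟩

lemma notMem_Gamma_of_Rrel (hM : IsMarkov M) {x z : ℝ} (hx : x ∈ M.Esc) (h : M.Rrel x z) :
    z ∉ M.Gamma := fun hz =>
  let ⟨k, hk⟩ := h.exists_iterate_notMem_dom hx
  hk (Gamma_subset_dom (iterate_mem_Gamma hM hz k))

lemma F_mem_Rclass_iff (hM : IsMarkov M) {x : ℝ} (hx : x ∈ M.Esc) {m : ℕ} (hm : m < n)
    {w : ℝ} (hw : w ∈ M.Ipart m) : M.F m w ∈ M.Rclass x ↔ w ∈ M.Rclass x := by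
  constructor
  · rintro ⟨-, hrel⟩
    have hwΓ : w ∉ M.Gamma := fun hΓ =>
      notMem_Gamma_of_Rrel hM hx hrel (F_mem_Gamma hM hm hw hΓ)
    rw [← f_eq_F_of_notMem_Gamma hM hm hw hwΓ] at hrel
    refine ⟨Ipart_subset_itv hm hw, Rrel.of_iterate (q := 1) hrel fun l hl => ?_⟩
    rw [Nat.lt_one_iff.mp hl]
    exact Ipart_subset_dom hm hw
  · rintro ⟨-, hrel⟩
    refine ⟨hM.maps_into m hm (mem_image_of_mem _ hw), ?_⟩
    rw [← f_eq_F_of_notMem_Gamma hM hm hw (notMem_Gamma_of_Rrel hM hx hrel)]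
    exact hrel.apply (Ipart_subset_dom hm hw)

lemma exists_of_mem_iterImage {S : Set ℝ} {q : ℕ} {y : ℝ} (hy : y ∈ M.iterImage q S) :
    ∃ u ∈ S, M.definedUpTo q u ∧ M.f^[q] u = y := by
  induction q generalizing y with
  | zero => exact ⟨y, hy, fun _ h => absurd h (Nat.not_lt_zero _), rfl⟩
  | succ q ih =>
    obtain ⟨y', ⟨hy', hy'd⟩, rfl⟩ := hy
    obtain ⟨u, huS, hu, rfl⟩ := ih hy'
    refine ⟨u, huS, ?_, Function.iterate_succ_apply' _ _ _⟩
    rw [add_comm]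
    exact definedUpTo_add hu fun l hl => by rwa [Nat.lt_one_iff.mp hl]

lemma exists_mem_Rclass_inter_Ipart (hM : IsMarkov M) {x : ℝ} (hx : x ∈ M.Esc) {j : ℕ}
    (hj : j < n) : (M.Rclass x ∩ M.Ipart j).Nonempty := by
  obtain ⟨m, hmr, w, hw, hwx⟩ := mem_iUnion₂.mp (hM.onto hx.1)
  have hm : m < n := Finset.mem_range.mp hmr
  have hxx : M.Rrel x x := ⟨0, 0, fun _ h => absurd h (Nat.not_lt_zero _),
    fun _ h => absurd h (Nat.not_lt_zero _), rfl⟩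
  have hwc : w ∈ M.Rclass x := (F_mem_Rclass_iff hM hx hm hw).mp (hwx.symm ▸ ⟨hx.1, hxx⟩)
  obtain ⟨q, hq⟩ := hM.aperiodic j hj
  obtain ⟨u, huI, hu, rfl⟩ := exists_of_mem_iterImage (hq (Ipart_subset_dom hm hw))
  exact ⟨u, ⟨Ipart_subset_itv hj huI, hwc.2.of_iterate hu⟩, huI⟩

lemma Rclass_inter_Ipart_subset_image (hM : IsMarkov M) {x : ℝ} (hx : x ∈ M.Esc) {i j : ℕ}
    (hj : j < n) (hij : M.trans i j) : M.Rclass x ∩ M.Ipart j ⊆ M.F i '' M.Ipart i := by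
  rintro z ⟨hz, hzI⟩
  refine image_mono interior_subset (hij ?_)
  rw [Ipart, interior_Icc]
  exact mem_Ioo_of_notMem_Gamma hj hzI (notMem_Gamma_of_Rrel hM hx hz.2)

end MarkovSystem

/-- For `x ∈ E_f` and each pair `(i,j)` with `a_{ij} = 1`, the operator
`S_{ij} = T_i T_j T_j*` is a nonzero partial isometry with
`S_{ij}* S_{ij} = P_j` and `S_{ij} S_{ij}* ≤ P_i`. -/
theorem Sij_partial_isometry {n : ℕ} (M : MarkovSystem n) (hM : IsMarkov M)
    {x : ℝ} (hx : x ∈ M.Esc)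
    (T : ℕ → (M.Hsp x →L[ℂ] M.Hsp x)) (hT : ∀ i < n, M.IsBranchOp x i (T i))
    {i j : ℕ} (hi : i < n) (hj : j < n) (hij : M.trans i j) :
    T i * (T j * star (T j)) ≠ 0 ∧
    (T i * (T j * star (T j))) * star (T i * (T j * star (T j))) *
        (T i * (T j * star (T j))) = T i * (T j * star (T j)) ∧
    star (T i * (T j * star (T j))) * (T i * (T j * star (T j))) =
      T j * star (T j) ∧
    (T i * star (T i) -
      (T i * (T j * star (T j))) * star (T i * (T j * star (T j)))).IsPositive := by
  have hS (m : ℕ) (hm : m < n) (w : ℝ) (hw : w ∈ M.Ipart m) :=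
    MarkovSystem.F_mem_Rclass_iff hM hx hm hw
  have hinj (m : ℕ) (hm : m < n) : (M.Ipart m).InjOn (M.F m) :=
    (hM.mono m hm).elim StrictMonoOn.injOn StrictAntiOn.injOn
  have hPj := IsCompositionOpOn.mul_star_apply (hT j hj) (hS j hj) (hinj j hj)
  have hQi := IsCompositionOpOn.star_mul_apply (hT i hi) (hS i hi) (hinj i hi)
  have hP : IsStarProjection (T j * star (T j)) :=
    ⟨mul_eq_right_of_apply_eq_indicator hPj hPj subset_rfl, .mul_star_self _⟩
  have hPT : star (T i) * T i * (T j * star (T j)) = T j * star (T j) :=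
    mul_eq_right_of_apply_eq_indicator hQi hPj fun u hu =>
      MarkovSystem.Rclass_inter_Ipart_subset_image hM hx hj hij ⟨u.2, hu⟩
  have hSS := hP.star_mul_mul_self hPT
  refine ⟨fun h0 => ?_, by rw [mul_assoc, hSS, mul_assoc, hP.isIdempotentElem.eq], hSS,
    (ContinuousLinearMap.nonneg_iff_isPositive _).mp (sub_nonneg.mpr (hP.mul_mul_star_le (T i)))⟩
  obtain ⟨u, hu, huI⟩ := MarkovSystem.exists_mem_Rclass_inter_Ipart hM hx hj
  exact ne_zero_of_apply_eq_indicator hPj ⟨⟨u, hu⟩, huI⟩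
    (by rw [← hSS, h0, star_zero, zero_mul])
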